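/- The reachability interface for the running example is valid: with A(n) = Globally(⊤), A(w) = Globally(lp = 100), A(v) = (route = none) Until_1 Globally(tag = true), A(d) = (route = none) Until_2 Globally(tag = true), and A(e) = Finally_3 Globally(route ≠ none), the interface satisfies the initial and inductive verification conditions at every node; consequently node e has a non-null route at all times t ≥ 3 in the simulation. -/
import Mathlib


/-- A network instance: in-neighbors, initial routes, edge transfer functions
and a merge (selection) function. -/
structure Network (V : Type) (S : Type) where
  pred : V → List V
  init : V → S
  T : V → V → S → S
  merge : S → S → S

/-- The route computed at `v` from neighbor states `s`:
`init v` merged with the transferred routes of the in-neighbors. -/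
def mergedState {V S : Type} (N : Network V S) (v : V) (s : V → S) : S :=
  (N.pred v).foldr (fun u acc => N.merge (N.T u v (s u)) acc) (N.init v)

/-- The synchronous simulation state. -/
def sim {V S : Type} (N : Network V S) : ℕ → V → S
  | 0, v => N.init v
  | t + 1, v => mergedState N v (sim N t)

/-- Initial verification condition. -/
def InitCond {V S : Type} (N : Network V S) (A : V → ℕ → Set S) : Prop :=
  ∀ v, N.init v ∈ A v 0

/-- Inductive verification condition. -/
def IndCond {V S : Type} (N : Network V S) (A : V → ℕ → Set S) : Prop :=
  ∀ v (t : ℕ) (s : V → S), (∀ u ∈ N.pred v, s u ∈ A u t) →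
    mergedState N v s ∈ A v (t + 1)

/-- The `globally` temporal operator. -/
def Globally {S : Type} (φ : Set S) : ℕ → Set S := fun _ => φ

/-- The `until` temporal operator with witness time `τ`. -/
def UntilOp {S : Type} (τ : ℕ) (φ : Set S) (Q : ℕ → Set S) : ℕ → Set S :=
  fun t => if t < τ then φ else Q t

/-- The `finally` temporal operator with witness time `τ`. -/
def FinallyOp {S : Type} (τ : ℕ) (Q : ℕ → Set S) : ℕ → Set S :=
  UntilOp τ Set.univ Q

/-- Nodes of the running five-node example network. -/
inductive Node | n | w | v | d | e
deriving DecidableEq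

/-- A concrete route record: local preference, path length, internal tag. -/
structure R where
  lp : ℕ
  len : ℕ
  tag : Bool
deriving DecidableEq

/-- Routes are optional records; `none` is the absence of a route. -/
abbrev Route := Option R

/-- Increment path length across an edge. -/
def incr (r : Route) : Route := r.map fun x => { x with len := x.len + 1 }

/-- Edge transfer functions: every edge increments `len`; `wv` sets the tag;
`nv` drops all routes; `de` drops untagged routes. -/
def transfer : Node → Node → Route → Route
  | .n, .v, _ => none
  | .w, .v, r => (incr r).map fun x => { x with tag := true }
  | .d, .e, r =>
      match incr r with
      | some x => if x.tag then some x else none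
      | none => none
  | _, _, r => incr r

/-- Merge: `none` is identity; prefer higher local preference, then shorter length. -/
def rmerge : Route → Route → Route
  | none, b => b
  | some a, none => some a
  | some a, some b =>
      if b.lp < a.lp then some a
      else if a.lp < b.lp then some b
      else if a.len ≤ b.len then some a else some b

/-- In-neighbors: edges nv, wv, vd, dv, de. -/
def epreds : Node → List Node
  | .v => [.n, .w, .d]
  | .d => [.v]
  | .e => [.d]
  | _ => []

/-- Initial routes: `w` has a route with lp 100; all others have none. -/
def exInit : Node → Route
  | .w => some ⟨100, 0, false⟩
  | _ => none

/-- The running example network instance. -/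
def exNet : Network Node Route := ⟨epreds, exInit, transfer, rmerge⟩

/-- The reachability interface for the running example. -/
def A11 : Node → ℕ → Set Route
  | .n => Globally Set.univ
  | .w => Globally {s | ∃ r, s = some r ∧ r.lp = 100}
  | .v => UntilOp 1 {s | s = none} (Globally {s | ∃ r, s = some r ∧ r.tag = true})
  | .d => UntilOp 2 {s | s = none} (Globally {s | ∃ r, s = some r ∧ r.tag = true})
  | .e => FinallyOp 3 (Globally {s | s ≠ none})

lemma init_cond : InitCond exNet A11 := by
  intro v
  cases v <;> simp [exNet, exInit, A11, Globally, UntilOp, FinallyOp, Set.mem_setOf_eq]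

lemma ind_cond : IndCond exNet A11 := by
  intro v t s hs
  cases v with
  | n => simp [A11, Globally]
  | w =>
      simp [mergedState, exNet, epreds, exInit, A11, Globally, Set.mem_setOf_eq]
  | v =>
      have hw := hs .w (by simp [exNet, epreds])
      have hd := hs .d (by simp [exNet, epreds])
      obtain ⟨rw, hrw, hlp⟩ := hw
      simp only [mergedState, exNet, epreds, List.foldr, exInit]
      simp only [A11, UntilOp, Globally, Set.mem_setOf_eq] at hd ⊢
      have h1 : ¬ (t + 1 < 1) := by omega
      simp only [h1, if_false]
      rw [hrw]
      by_cases ht : t < 2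
      · simp only [ht, if_true] at hd
        rw [hd]
        exact ⟨_, rfl, rfl⟩
      · simp only [ht, if_false] at hd
        obtain ⟨rd, hrd, htag⟩ := hd
        rw [hrd]
        simp only [transfer, incr, Option.map_some, rmerge]
        split_ifs <;> exact ⟨_, rfl, by simp [htag]⟩
  | d =>
      have hv := hs .v (by simp [exNet, epreds])
      simp only [mergedState, exNet, epreds, List.foldr, exInit]
      simp only [A11, UntilOp, Globally, Set.mem_setOf_eq] at hv ⊢
      by_cases ht : t + 1 < 2
      · have ht' : t < 1 := by omega
        simp only [ht', if_true] at hv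
        rw [hv]
        simp [ht, transfer, incr, rmerge]
      · simp only [ht, if_false]
        have ht' : ¬ t < 1 := by omega
        simp only [ht', if_false] at hv
        obtain ⟨r, hr, htag⟩ := hv
        rw [hr]
        exact ⟨_, rfl, by simp [transfer, incr, rmerge, htag]⟩
  | e =>
      have hd := hs .d (by simp [exNet, epreds])
      simp only [mergedState, exNet, epreds, List.foldr, exInit]
      simp only [A11, FinallyOp, UntilOp, Globally, Set.mem_setOf_eq] at hd ⊢
      by_cases ht : t + 1 < 3
      · simp [ht]
      · simp only [ht, if_false]
        have ht' : ¬ t < 2 := by omega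
        simp only [ht', if_false] at hd
        obtain ⟨r, hr, htag⟩ := hd
        rw [hr]
        simp [transfer, incr, rmerge, htag]

lemma sim_mem : ∀ t v, sim exNet t v ∈ A11 v t := by
  intro t
  induction t with
  | zero => intro v; exact init_cond v
  | succ t ih =>
      intro v
      exact ind_cond v t (sim exNet t) (fun u _ => ih u)

/-- The reachability interface is valid, hence e eventually has a route. -/
theorem reach_interface_valid :
    InitCond exNet A11 ∧ IndCond exNet A11 ∧
      (∀ t : ℕ, 3 ≤ t → sim exNet t Node.e ≠ none) := by
  refine ⟨init_cond, ind_cond, ?_⟩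
  intro t ht
  have h := sim_mem t .e
  simp only [A11, FinallyOp, UntilOp, Globally, Set.mem_setOf_eq] at h
  have : ¬ t < 3 := by omega
  simpa [this] using h
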